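/- For every bound N ∈ ℕ there exists a computable predictor that learns to predict every binary sequence computed by a partial recursive code of encoding at most N: for every N there is a computable p : List Bool → Bool such that for every ω : ℕ → Bool, if there exists a code c : Nat.Partrec.Code with Encodable.encode c ≤ N and with Encodable.encode (ω n) ∈ c.eval n for all n, then p learns to predict ω. -/

import Mathlib

/-- The length-`n` prefix `[ω 0, …, ω (n−1)]` of a binary sequence `ω`. -/
def prefixList (ω : ℕ → Bool) (n : ℕ) : List Bool := (List.range n).map ω

/-- A predictor `p` learns to predict the sequence `ω` if from some point on it
always predicts the next symbol correctly. -/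
def LearnsToPredict (p : List Bool → Bool) (ω : ℕ → Bool) : Prop :=
  ∃ m : ℕ, ∀ n ≥ m, p (prefixList ω n) = ω n

/-!
Only finitely many codes have encoding at most `N`, and each computes at most one sequence, so
the sequences to be learned form a finite set of computable sequences. A finite list
`a₁, …, a_k` is learned by predicting `aᵢ n` for the first `aᵢ` consistent with the observed
prefix of length `n`: every `aⱼ` different from the true sequence is eventually inconsistent
with it. The predictor is computable, although the finite set cannot be computed from `N`
(totality of a code is undecidable); only its existence is needed.
-/

open Encodable Nat.Partrec

theorem computable_of_forall_encode_mem_eval {α : Type*} [Primcodable α] {f : ℕ → α}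
    {c : Code} (h : ∀ n, encode (f n) ∈ c.eval n) : Computable f := by
  have heval : c.eval = fun n => Part.some (encode (f n)) :=
    funext fun n => Part.eq_some_iff.2 (h n)
  -- on the domain `ℕ`, `Computable f` unfolds to `Nat.Partrec fun n => encode (f n)`
  show Nat.Partrec _
  simpa [heval] using Code.exists_code.2 ⟨c, rfl⟩

theorem finite_setOf_exists_code_encode_le {α : Type*} [Encodable α] (N : ℕ) :
    {f : ℕ → α | ∃ c : Code, encode c ≤ N ∧ ∀ n, encode (f n) ∈ c.eval n}.Finite := by
  have hcodes : {c : Code | encode c ≤ N}.Finite :=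
    (Set.finite_Iic N).preimage encode_injective.injOn
  refine (hcodes.biUnion fun c _ => ?_).subset fun f ⟨c, hc, hf⟩ => Set.mem_biUnion hc hf
  refine Set.Subsingleton.finite fun f hf g hg => funext fun n => ?_
  exact encode_injective (Part.mem_unique (hf n) (hg n))

theorem prefixList_eq_prefixList_iff {ω a : ℕ → Bool} {n : ℕ} :
    prefixList ω n = prefixList a n ↔ ∀ i < n, ω i = a i := by
  simp [prefixList, List.map_inj_left]

@[simp] theorem length_prefixList (ω : ℕ → Bool) (n : ℕ) : (prefixList ω n).length = n := by
  simp [prefixList]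

theorem prefixList_succ (ω : ℕ → Bool) (n : ℕ) :
    prefixList ω (n + 1) = prefixList ω n ++ [ω n] := by
  simp [prefixList, List.range_succ]

theorem computable_prefixList {ω : ℕ → Bool} (hω : Computable ω) :
    Computable (prefixList ω) := by
  have hstep : Computable₂ fun (_ : ℕ) (q : ℕ × List Bool) => q.2 ++ [ω q.1] :=
    Computable.list_concat.comp (Computable.snd.comp Computable.snd)
      (hω.comp (Computable.fst.comp Computable.snd))
  refine (Computable.nat_rec Computable.id (Computable.const []) hstep).of_eq fun n => ?_
  induction n with
  | zero => rfl
  | succ n ih => simp_all [prefixList_succ]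

def consistentOr (a : ℕ → Bool) (p : List Bool → Bool) (l : List Bool) : Bool :=
  if l = prefixList a l.length then a l.length else p l

theorem Computable.consistentOr {a : ℕ → Bool} {p : List Bool → Bool} (ha : Computable a)
    (hp : Computable p) : Computable (consistentOr a p) := by
  have hlen := Computable.list_length (α := Bool)
  have hmatch : Computable fun l : List Bool => decide (l = prefixList a l.length) :=
    Primrec.eq.decide.to_comp.comp Computable.id ((computable_prefixList ha).comp hlen)
  exact (Computable.cond hmatch (ha.comp hlen) hp).of_eq fun l => by
    simp [_root_.consistentOr, Bool.cond_decide]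

theorem learnsToPredict_consistentOr_self (a : ℕ → Bool) (p : List Bool → Bool) :
    LearnsToPredict (consistentOr a p) a :=
  ⟨0, fun n _ => by simp [consistentOr]⟩

theorem LearnsToPredict.consistentOr {p : List Bool → Bool} {ω : ℕ → Bool} (a : ℕ → Bool)
    (h : LearnsToPredict p ω) : LearnsToPredict (consistentOr a p) ω := by
  by_cases hωa : ω = a
  · exact hωa ▸ learnsToPredict_consistentOr_self ω p
  obtain ⟨m, hm⟩ := h
  obtain ⟨i, hi⟩ : ∃ i, ω i ≠ a i := Function.ne_iff.1 hωa
  refine ⟨max m (i + 1), fun n hn => ?_⟩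
  have hdiff : prefixList ω n ≠ prefixList a n := fun heq =>
    hi (prefixList_eq_prefixList_iff.1 heq i (by omega))
  simpa [_root_.consistentOr, hdiff] using hm n (le_of_max_le_left hn)

theorem Set.Finite.exists_computable_learnsToPredict {T : Set (ℕ → Bool)} (hT : T.Finite)
    (hcomp : ∀ ω ∈ T, Computable ω) :
    ∃ p, Computable p ∧ ∀ ω ∈ T, LearnsToPredict p ω := by
  induction T, hT using Set.Finite.induction_on with
  | empty => exact ⟨fun _ => false, Computable.const false, by simp⟩
  | @insert a T _ _ ih =>
    obtain ⟨p, hp, hlearn⟩ := ih fun ω hω => hcomp ω (Set.mem_insert_of_mem a hω)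
    refine ⟨consistentOr a p, (hcomp a (Set.mem_insert a T)).consistentOr hp, ?_⟩
    rintro ω (rfl | hω)
    · exact learnsToPredict_consistentOr_self ω p
    · exact (hlearn ω hω).consistentOr a

/-- For every bound `N` there is a computable predictor learning to predict
every sequence computed by a partial recursive code of encoding at most `N`. -/
theorem stmt_9 :
    ∀ N : ℕ, ∃ p : List Bool → Bool, Computable p ∧
      ∀ ω : ℕ → Bool,
        (∃ c : Nat.Partrec.Code, Encodable.encode c ≤ N ∧
            ∀ n : ℕ, Encodable.encode (ω n) ∈ c.eval n) →
        LearnsToPredict p ω := by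
  intro N
  obtain ⟨p, hp, hlearn⟩ := (finite_setOf_exists_code_encode_le N).exists_computable_learnsToPredict
    fun ω ⟨_, _, hω⟩ => computable_of_forall_encode_mem_eval hω
  exact ⟨p, hp, hlearn⟩
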